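/- Let ξ(x) = e^{−(x+h)²/(2σ)} + e^{−(x−h)²/(2σ)} with σ>0, h>0. The equation ξ'(x)=0 is equivalent to x = h·tanh(xh/σ), and this equation has a strictly positive solution if and only if h² > σ; in that case the positive solution is unique. -/

import Mathlib

/-!
Since `ξ(y) = 2 exp (-(y² + h²) / (2σ)) cosh (y h / σ)`, its derivative is a nonvanishing multiple
of `h sinh t - x cosh t` with `t = x h / σ`. The substitution `u = x h / σ` turns `x = h tanh t`
into `tanh u = k u` with `k = σ / h²`. As `tanh` is strictly concave on `[0, ∞)` with
`tanh 0 = 0` and `tanh' 0 = 1`, a line `u ↦ k u` meets its graph at some `u > 0` iff `k < 1`,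
and then at only one such point.
-/

open Real Filter Set Topology

namespace Real

theorem hasDerivAt_tanh (x : ℝ) : HasDerivAt tanh (1 / cosh x ^ 2) x := by
  have h := (hasDerivAt_sinh x).div (hasDerivAt_cosh x) (cosh_pos x).ne'
  rw [show tanh = fun y => sinh y / cosh y from funext tanh_eq_sinh_div_cosh]
  refine h.congr_deriv ?_
  rw [← cosh_sq_sub_sinh_sq x]
  ring

theorem continuous_tanh : Continuous tanh :=
  continuous_iff_continuousAt.2 fun x => (hasDerivAt_tanh x).continuousAt

theorem strictConcaveOn_tanh : StrictConcaveOn ℝ (Ici 0) tanh := by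
  refine StrictAntiOn.strictConcaveOn_of_deriv (convex_Ici 0) continuous_tanh.continuousOn ?_
  rw [interior_Ici]
  intro x hx y hy hxy
  simp only [(hasDerivAt_tanh _).deriv]
  have := cosh_strictMonoOn (mem_Ici_of_Ioi hx) (mem_Ici_of_Ioi hy) hxy
  gcongr

theorem tanh_lt_self {x : ℝ} (hx : 0 < x) : tanh x < x := by
  have h := strictConcaveOn_tanh.slope_lt_of_hasDerivAt self_mem_Ici hx.le hx (hasDerivAt_tanh 0)
  rw [slope_def_field, tanh_zero, cosh_zero, sub_zero, sub_zero, div_lt_iff₀ hx] at h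
  simpa using h

theorem eq_of_tanh_eq_mul {k a b : ℝ} (ha : 0 < a) (hb : 0 < b)
    (hta : tanh a = k * a) (htb : tanh b = k * b) : a = b := by
  wlog hab : a < b generalizing a b
  · exact (not_lt.1 hab).lt_or_eq.elim (fun h => (this hb ha htb hta h).symm) Eq.symm
  have h := strictConcaveOn_tanh.slope_anti_adjacent self_mem_Ici hb.le ha hab
  rw [hta, htb, tanh_zero, ← mul_sub, mul_div_cancel_right₀ _ (sub_pos.2 hab).ne',
    sub_zero, sub_zero, mul_div_cancel_right₀ _ ha.ne'] at h
  exact h.false.elim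

theorem exists_pos_tanh_eq_mul {k : ℝ} (hk₀ : 0 < k) (hk₁ : k < 1) :
    ∃ u, 0 < u ∧ tanh u = k * u := by
  have hslope : Tendsto (slope tanh 0) (𝓝[>] 0) (𝓝 1) := by
    simpa using (hasDerivAt_iff_tendsto_slope.1 (hasDerivAt_tanh 0)).mono_left
      (nhdsWithin_mono 0 fun y (hy : y ∈ Ioi 0) => ne_of_gt hy)
  obtain ⟨u₁, hu₁, hu₁pos⟩ :=
    ((hslope.eventually (lt_mem_nhds hk₁)).and self_mem_nhdsWithin).exists
  rw [slope_def_field, tanh_zero, sub_zero, sub_zero, lt_div_iff₀ hu₁pos] at hu₁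
  have hu₂ : tanh (1 / k) < k * (1 / k) := by
    rw [mul_one_div_cancel hk₀.ne']
    exact tanh_lt_one _
  have hu₁₂ : u₁ ≤ 1 / k := by
    rw [le_div_iff₀ hk₀]
    linarith [tanh_lt_one u₁]
  obtain ⟨u, hu, hFu⟩ := intermediate_value_Icc' (f := fun u => tanh u - k * u) hu₁₂
    (continuous_tanh.sub (continuous_const.mul continuous_id)).continuousOn
    (show (0 : ℝ) ∈ Icc (tanh (1 / k) - k * (1 / k)) (tanh u₁ - k * u₁) from
      ⟨by linarith, by linarith⟩)
  exact ⟨u, hu₁pos.trans_le hu.1, sub_eq_zero.1 hFu⟩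

theorem exists_pos_tanh_eq_mul_iff {k : ℝ} (hk : 0 < k) :
    (∃ u, 0 < u ∧ tanh u = k * u) ↔ k < 1 := by
  refine ⟨fun ⟨u, hu, htu⟩ => ?_, exists_pos_tanh_eq_mul hk⟩
  have := tanh_lt_self hu
  rw [htu] at this
  exact (mul_lt_iff_lt_one_left hu).1 this

end Real

noncomputable def symmGaussianSum (σ h y : ℝ) : ℝ :=
  exp (-(y + h) ^ 2 / (2 * σ)) + exp (-(y - h) ^ 2 / (2 * σ))

section SymmGaussianSum

variable {σ h : ℝ}

theorem symmGaussianSum_eq (hσ : σ ≠ 0) (y : ℝ) :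
    symmGaussianSum σ h y = 2 * exp (-(y ^ 2 + h ^ 2) / (2 * σ)) * cosh (y * h / σ) := by
  have hplus : -(y + h) ^ 2 / (2 * σ) = -(y ^ 2 + h ^ 2) / (2 * σ) + -(y * h / σ) := by
    field_simp; ring
  have hminus : -(y - h) ^ 2 / (2 * σ) = -(y ^ 2 + h ^ 2) / (2 * σ) + y * h / σ := by
    field_simp; ring
  rw [symmGaussianSum, cosh_eq, hplus, hminus, exp_add, exp_add]
  ring

theorem hasDerivAt_symmGaussianSum (hσ : σ ≠ 0) (x : ℝ) :
    HasDerivAt (symmGaussianSum σ h)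
      (2 * exp (-(x ^ 2 + h ^ 2) / (2 * σ)) / σ * (h * sinh (x * h / σ) - x * cosh (x * h / σ)))
      x := by
  rw [show symmGaussianSum σ h = _ from funext (symmGaussianSum_eq hσ)]
  have hq : HasDerivAt (fun y => -(y ^ 2 + h ^ 2) / (2 * σ)) (-(2 * x) / (2 * σ)) x := by
    simpa using (((hasDerivAt_pow 2 x).add_const (h ^ 2)).neg).div_const (2 * σ)
  have hl : HasDerivAt (fun y => y * h / σ) (h / σ) x := by
    simpa using ((hasDerivAt_id x).mul_const h).div_const σ
  refine ((hq.exp.const_mul 2).mul hl.cosh).congr_deriv ?_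
  field_simp
  ring

theorem deriv_symmGaussianSum_eq_zero_iff (hσ : σ ≠ 0) (x : ℝ) :
    deriv (symmGaussianSum σ h) x = 0 ↔ x = h * tanh (x * h / σ) := by
  have hc : 2 * exp (-(x ^ 2 + h ^ 2) / (2 * σ)) / σ ≠ 0 := div_ne_zero (by positivity) hσ
  rw [(hasDerivAt_symmGaussianSum hσ x).deriv, mul_eq_zero, or_iff_right hc, sub_eq_zero,
    tanh_eq_sinh_div_cosh, ← mul_div_assoc, eq_div_iff (cosh_pos _).ne', eq_comm]

end SymmGaussianSum

section FixedPoint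

variable {σ h : ℝ}

theorem pos_eq_mul_tanh_iff (hσ : 0 < σ) (hh : 0 < h) {x : ℝ} :
    (0 < x ∧ x = h * tanh (x * h / σ)) ↔
      (0 < x * h / σ ∧ tanh (x * h / σ) = σ / h ^ 2 * (x * h / σ)) := by
  have hxh : σ / h ^ 2 * (x * h / σ) = x / h := by field_simp
  have hpos : 0 < x ↔ 0 < x * h / σ := by
    rw [mul_div_assoc]
    exact (mul_pos_iff_of_pos_right (by positivity)).symm
  rw [hxh, hpos, eq_div_iff hh.ne', eq_comm (a := x), mul_comm h]

theorem exists_pos_eq_mul_tanh_iff (hσ : 0 < σ) (hh : 0 < h) :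
    (∃ x, 0 < x ∧ x = h * tanh (x * h / σ)) ↔ σ < h ^ 2 := by
  rw [← div_lt_one (by positivity), ← exists_pos_tanh_eq_mul_iff (by positivity)]
  constructor
  · rintro ⟨x, hx⟩
    exact ⟨_, (pos_eq_mul_tanh_iff hσ hh).1 hx⟩
  · rintro ⟨u, hu⟩
    refine ⟨u * σ / h, (pos_eq_mul_tanh_iff hσ hh).2 ?_⟩
    rwa [show u * σ / h * h / σ = u by field_simp]

theorem existsUnique_pos_eq_mul_tanh (hσ : 0 < σ) (hh : 0 < h) (hσh : σ < h ^ 2) :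
    ∃! x, 0 < x ∧ x = h * tanh (x * h / σ) := by
  obtain ⟨x, hx⟩ := (exists_pos_eq_mul_tanh_iff hσ hh).2 hσh
  refine ⟨x, hx, fun y hy => ?_⟩
  rw [pos_eq_mul_tanh_iff hσ hh] at hx hy
  simpa [hh.ne', hσ.ne'] using eq_of_tanh_eq_mul hy.1 hx.1 hy.2 hx.2

end FixedPoint

theorem stmt_5 (σ h : ℝ) (hσ : 0 < σ) (hh : 0 < h) :
    (∀ x : ℝ,
      deriv (fun y => Real.exp (-(y + h)^2 / (2 * σ)) + Real.exp (-(y - h)^2 / (2 * σ))) x = 0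
        ↔ x = h * Real.tanh (x * h / σ)) ∧
    ((∃ x : ℝ, 0 < x ∧ x = h * Real.tanh (x * h / σ)) ↔ σ < h^2) ∧
    (σ < h^2 → ∃! x : ℝ, 0 < x ∧ x = h * Real.tanh (x * h / σ)) :=
  ⟨deriv_symmGaussianSum_eq_zero_iff hσ.ne', exists_pos_eq_mul_tanh_iff hσ hh,
    existsUnique_pos_eq_mul_tanh hσ hh⟩
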